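/- arXiv:2601.22992 — 3 statements merged into one kernel-verified Lean document; each statement's English description precedes it below -/
import Mathlib

section
/- Let f and g be quasi-polynomial functions ℤ → ℚ such that f - g is a polynomial function. Then for each degree i, the i-th coefficient functions of f and g differ by a constant, and hence have the same minimum period. -/
open Polynomial

private lemma period_mul' {c : ℤ → ℚ} {d : ℕ} (hd : ∀ k : ℤ, c (k + d) = c k) :
    ∀ m : ℕ, ∀ k : ℤ, c (k + (d * m : ℕ)) = c k := by
  intro m
  induction m with
  | zero => simp
  | succ m ih =>
    intro k
    have h1 : (k + ((d * (m + 1) : ℕ) : ℤ)) = (k + (d * m : ℕ)) + d := by push_cast; ring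
    rw [h1, hd, ih]

private lemma common_period' (n : ℕ) (c : ℕ → ℤ → ℚ)
    (h : ∀ i ≤ n, ∃ d : ℕ, 0 < d ∧ ∀ k : ℤ, c i (k + d) = c i k) :
    ∃ D : ℕ, 0 < D ∧ ∀ i ≤ n, ∀ k : ℤ, c i (k + D) = c i k := by
  induction n with
  | zero =>
    obtain ⟨d, hd, hdp⟩ := h 0 le_rfl
    exact ⟨d, hd, fun i hi k => by rw [Nat.le_zero.mp hi]; exact hdp k⟩
  | succ n ih =>
    obtain ⟨D, hD, hDp⟩ := ih (fun i hi => h i (hi.trans (Nat.le_succ n)))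
    obtain ⟨d, hd, hdp⟩ := h (n + 1) le_rfl
    refine ⟨D * d, Nat.mul_pos hD hd, fun i hi k => ?_⟩
    rcases Nat.lt_succ_iff_lt_or_eq.mp (Nat.lt_succ_of_le hi) with h' | h'
    · exact period_mul' (hDp i (Nat.lt_succ_iff.mp h')) d k
    · rw [h', Nat.mul_comm]
      exact period_mul' hdp D k

theorem stmt3 (n : ℕ) (f g : ℤ → ℚ) (cf cg : ℕ → ℤ → ℚ)
    (hcf : ∀ i ≤ n, ∃ d : ℕ, 0 < d ∧ ∀ k : ℤ, cf i (k + d) = cf i k)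
    (hcg : ∀ i ≤ n, ∃ d : ℕ, 0 < d ∧ ∀ k : ℤ, cg i (k + d) = cg i k)
    (hf : ∀ k : ℤ, f k = ∑ i ∈ Finset.range (n + 1), cf i k * (k : ℚ) ^ i)
    (hg : ∀ k : ℤ, g k = ∑ i ∈ Finset.range (n + 1), cg i k * (k : ℚ) ^ i)
    (hpoly : ∃ P : Polynomial ℚ, ∀ k : ℤ, f k - g k = P.eval (k : ℚ)) :
    ∀ i ≤ n,
      (∃ a : ℚ, ∀ k : ℤ, cf i k - cg i k = a) ∧
      (∀ d : ℕ, 0 < d →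
        ((∀ k : ℤ, cf i (k + d) = cf i k) ↔ (∀ k : ℤ, cg i (k + d) = cg i k))) := by
  obtain ⟨P, hP⟩ := hpoly
  obtain ⟨Df, hDf, hDfp⟩ := common_period' n cf hcf
  obtain ⟨Dg, hDg, hDgp⟩ := common_period' n cg hcg
  set D : ℕ := Df * Dg with hDdef
  have hD : 0 < D := Nat.mul_pos hDf hDg
  have hDp : ∀ i ≤ n, ∀ k : ℤ, cf i (k + D) = cf i k ∧ cg i (k + D) = cg i k := by
    intro i hi k
    constructor
    · exact period_mul' (hDfp i hi) Dg k
    · rw [hDdef, Nat.mul_comm]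
      exact period_mul' (hDgp i hi) Df k
  -- key: the coefficient difference is constant = P.coeff i
  have hconst : ∀ i ≤ n, ∀ r : ℤ, cf i r - cg i r = P.coeff i := by
    intro i hi r
    set Q : Polynomial ℚ :=
      ∑ j ∈ Finset.range (n + 1), C (cf j r - cg j r) * X ^ j with hQdef
    have hQeval : ∀ x : ℚ, Q.eval x = ∑ j ∈ Finset.range (n + 1), (cf j r - cg j r) * x ^ j := by
      intro x
      simp [hQdef, eval_finset_sum]
    have hQP : Q = P := by
      apply Polynomial.eq_of_infinite_eval_eq
      have hsub : Set.range (fun m : ℕ => ((r + (m * D : ℕ) : ℤ) : ℚ)) ⊆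
          {x | Q.eval x = P.eval x} := by
        rintro x ⟨m, rfl⟩
        set k : ℤ := r + (m * D : ℕ) with hk
        have hper : ∀ j ≤ n, cf j k = cf j r ∧ cg j k = cg j r := by
          intro j hj
          have h1 : k = r + (D * m : ℕ) := by rw [hk, Nat.mul_comm]
          rw [h1]
          constructor
          · exact period_mul' (fun k' => (hDp j hj k').1) m r
          · exact period_mul' (fun k' => (hDp j hj k').2) m r
        have hfg : f k - g k = ∑ j ∈ Finset.range (n + 1), (cf j r - cg j r) * (k : ℚ) ^ j := by
          rw [hf, hg, ← Finset.sum_sub_distrib]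
          apply Finset.sum_congr rfl
          intro j hj
          have hj' := Finset.mem_range.mp hj
          rw [(hper j (Nat.lt_succ_iff.mp hj')).1, (hper j (Nat.lt_succ_iff.mp hj')).2]
          ring
        show Q.eval (k : ℚ) = P.eval (k : ℚ)
        rw [hQeval, ← hfg, hP]
      apply Set.Infinite.mono hsub
      apply Set.infinite_range_of_injective
      intro m m' hmm
      have hD' : (D : ℚ) ≠ 0 := Nat.cast_ne_zero.mpr hD.ne'
      have h2 : (m : ℚ) * D = (m' : ℚ) * D := by
        push_cast at hmm
        linarith
      have h3 : (m : ℚ) = m' := mul_right_cancel₀ hD' h2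
      exact_mod_cast h3
    have : Q.coeff i = cf i r - cg i r := by
      rw [hQdef]
      rw [Polynomial.finset_sum_coeff]
      rw [Finset.sum_eq_single i]
      · rw [coeff_C_mul, coeff_X_pow, if_pos rfl, mul_one]
      · intro j hj hji
        rw [coeff_C_mul, coeff_X_pow, if_neg (Ne.symm hji), mul_zero]
      · intro hni
        exact absurd (Finset.mem_range.mpr (Nat.lt_succ_of_le hi)) hni
    rw [← this, hQP]
  intro i hi
  have ha := hconst i hi
  refine ⟨⟨P.coeff i, ha⟩, fun d hd => ?_⟩
  have heq : ∀ k : ℤ, cf i k = cg i k + P.coeff i := by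
    intro k; have := ha k; linarith
  constructor
  · intro h k
    have h1 := h k
    rw [heq, heq] at h1
    linarith
  · intro h k
    rw [heq, heq, h k]
end

section
/- Let p ≥ 1 and let ℓ = [-1/p, 0]. Suppose s₁,...,s_{n-1} are positive integers and t₁,...,t_{n-2} are positive integers together with t_{n-1} = 0 such that p_k(s) = p_k(t₁,...,t_{n-2},0) for 1 ≤ k ≤ n-2. Define f(k) = (∏ᵢ(sᵢk+1) - ∏ⱼ(tⱼk+1))·ehr_ℓ(k). Then f(k) = s₁⋯s_{n-1} k^{n-1} ehr_ℓ(k), and f is a quasi-polynomial whose coefficient functions are all constant except the coefficient of k^{n-1}, which has minimum period exactly p (modulo addition of polynomials). -/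
/-!
Newton's identities determine the elementary symmetric functions `e₁, …, e_m` recursively from
the power sums `p₁, …, p_m` (each step divides by `k`, hence characteristic zero). Expanding
`∏ (x_i c + 1) = ∑ e_j(x) c^j`, the two products therefore agree in every coefficient except
the top one, `e_{m+1}(s) = s₁⋯s_{m+1}`, while `e_{m+1}(t) = 0` since `t` has only `m` entries.
Then `ehr_ℓ(k) = c₀(k) + k/p` splits off the polynomial `(s₁⋯s_{m+1}/p) k^{m+2}`, and
`c₀(k) = 1 - (k mod p)/p` has period `d > 0` only if `p ∣ d`.
-/

/-- `ehr_ℓ(k) = ⌊k/p⌋ + 1`, the lattice point count of the `k`-th dilate of `[-1/p, 0]`. -/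
def ehrSeg (p k : ℕ) : ℚ := ((k / p : ℕ) : ℚ) + 1

/-- The constant-term coefficient function of `ehr_ℓ`:  `c₀(k) = ehr_ℓ(k) - k/p`. -/
def c₀ (p k : ℕ) : ℚ := ehrSeg p k - (k : ℚ) / p

open Finset MvPolynomial

section CommRing

variable {R : Type*} [CommRing R] {σ : Type*} [Fintype σ]

theorem aeval_esymm_card (x : σ → R) : aeval x (esymm σ R (Fintype.card σ)) = ∏ i, x i := by
  simp [esymm, ← card_univ, powersetCard_self]

theorem prod_mul_add_one_eq_sum_aeval_esymm (x : σ → R) (c : R) :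
    ∏ i, (x i * c + 1) = ∑ j ∈ range (Fintype.card σ + 1), aeval x (esymm σ R j) * c ^ j := by
  rw [prod_add_one, ← sum_fiberwise_of_maps_to (g := card) (t := range (Fintype.card σ + 1))
    fun u _ => mem_range.mpr (Nat.lt_succ_of_le (card_le_univ u))]
  refine sum_congr rfl fun j _ => ?_
  rw [← powersetCard_eq_filter]
  simp only [esymm, map_sum, map_prod, aeval_X, sum_mul]
  refine sum_congr rfl fun u hu => ?_
  rw [prod_mul_distrib, prod_const, (mem_powersetCard.mp hu).2]

theorem natCast_mul_aeval_esymm (x : σ → R) (k : ℕ) :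
    k * aeval x (esymm σ R k) = (-1) ^ (k + 1) *
      ∑ a ∈ antidiagonal k with a.1 < k, (-1) ^ a.1 * aeval x (esymm σ R a.1) * ∑ i, x i ^ a.2 := by
  simpa [psum] using congrArg (aeval x) (mul_esymm_eq_sum σ R k)

end CommRing

section Field

variable {K : Type*} [Field K] [CharZero K] {σ τ : Type*} [Fintype σ] [Fintype τ]

theorem aeval_esymm_eq_of_sum_pow_eq (x : σ → K) (y : τ → K) {r : ℕ}
    (h : ∀ k, 1 ≤ k → k ≤ r → ∑ i, x i ^ k = ∑ j, y j ^ k) {k : ℕ} (hk : k ≤ r) :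
    aeval x (esymm σ K k) = aeval y (esymm τ K k) := by
  induction k using Nat.strong_induction_on with
  | _ k ih =>
    rcases Nat.eq_zero_or_pos k with rfl | hk0
    · simp
    refine mul_left_cancel₀ (Nat.cast_ne_zero.mpr hk0.ne' : (k : K) ≠ 0) ?_
    rw [natCast_mul_aeval_esymm, natCast_mul_aeval_esymm]
    congr 1
    refine sum_congr rfl fun a ha => ?_
    rw [mem_filter, HasAntidiagonal.mem_antidiagonal] at ha
    rw [ih a.1 ha.2 (by omega), h a.2 (by omega) (by omega)]

theorem prod_mul_add_one_sub_prod_mul_add_one_of_sum_pow_eq (x : σ → K) (y : τ → K)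
    (hcard : Fintype.card σ = Fintype.card τ + 1)
    (h : ∀ k, 1 ≤ k → k ≤ Fintype.card τ → ∑ i, x i ^ k = ∑ j, y j ^ k) (c : K) :
    ∏ i, (x i * c + 1) - ∏ j, (y j * c + 1) = (∏ i, x i) * c ^ Fintype.card σ := by
  have htop : aeval x (esymm σ K (Fintype.card τ + 1)) = ∏ i, x i := hcard ▸ aeval_esymm_card x
  have hlow : ∀ j ∈ range (Fintype.card τ + 1),
      aeval x (esymm σ K j) * c ^ j = aeval y (esymm τ K j) * c ^ j := fun j hj => by
    rw [aeval_esymm_eq_of_sum_pow_eq x y h (Nat.lt_succ_iff.mp (mem_range.mp hj))]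
  rw [prod_mul_add_one_eq_sum_aeval_esymm, prod_mul_add_one_eq_sum_aeval_esymm, hcard,
    sum_range_succ, sum_congr rfl hlow, htop, add_sub_cancel_left]

end Field

-- Also for `p = 0`, where both sides are `1` since division by `0` gives `0` in `ℕ` and `ℚ`.
theorem c₀_eq_one_sub_mod_div (p k : ℕ) : c₀ p k = 1 - ((k % p : ℕ) : ℚ) / p := by
  rcases Nat.eq_zero_or_pos p with rfl | hp
  · simp [c₀, ehrSeg]
  have hp' : (p : ℚ) ≠ 0 := by positivity
  have := congrArg (Nat.cast : ℕ → ℚ) (Nat.div_add_mod k p)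
  push_cast at this
  rw [c₀, ehrSeg, ← this]
  field_simp
  ring

theorem ehrSeg_eq_c₀_add_div (p k : ℕ) : ehrSeg p k = c₀ p k + (k : ℚ) / p := by
  rw [c₀, sub_add_cancel]

theorem c₀_periodic (p : ℕ) : Function.Periodic (c₀ p) p := fun k => by
  simp only [c₀_eq_one_sub_mod_div, Nat.add_mod_right]

theorem le_of_periodic_c₀ {p d : ℕ} (hd : 0 < d) (h : Function.Periodic (c₀ p) d) : p ≤ d := by
  rcases Nat.eq_zero_or_pos p with rfl | hp
  · exact Nat.zero_le d
  have hmod : d % p = 0 := by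
    simpa [c₀_eq_one_sub_mod_div, hp.ne'] using h 0
  exact Nat.le_of_dvd hd (Nat.dvd_of_mod_eq_zero hmod)

theorem stmt14_general (p : ℕ) (n : ℕ) (hn : 2 ≤ n)
    (s : Fin (n - 1) → ℤ) (t : Fin (n - 2) → ℤ)
    (hs : ∀ i, 0 < s i)
    (hpow : ∀ k : ℕ, 1 ≤ k → k ≤ n - 2 → ∑ i, (s i) ^ k = ∑ j, (t j) ^ k)
    (f : ℕ → ℚ)
    (hf : ∀ k : ℕ, f k =
      ((∏ i, ((s i : ℚ) * k + 1)) - ∏ j, ((t j : ℚ) * k + 1)) * ehrSeg p k) :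
    (∀ k : ℕ, f k = (∏ i, (s i : ℚ)) * (k : ℚ) ^ (n - 1) * ehrSeg p k) ∧
    (∃ P : Polynomial ℚ, ∀ k : ℕ,
      f k = (∏ i, (s i : ℚ)) * c₀ p k * (k : ℚ) ^ (n - 1) + P.eval (k : ℚ)) ∧
    (∀ k : ℕ, (∏ i, (s i : ℚ)) * c₀ p (k + p) = (∏ i, (s i : ℚ)) * c₀ p k) ∧
    (∀ d : ℕ, 0 < d →
      (∀ k : ℕ, (∏ i, (s i : ℚ)) * c₀ p (k + d) = (∏ i, (s i : ℚ)) * c₀ p k) → p ≤ d) := by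
  set S := ∏ i, (s i : ℚ)
  have hS : S ≠ 0 := prod_ne_zero_iff.mpr fun i _ => by exact_mod_cast (hs i).ne'
  have hclosed : ∀ k : ℕ, f k = S * (k : ℚ) ^ (n - 1) * ehrSeg p k := fun k => by
    rw [hf, prod_mul_add_one_sub_prod_mul_add_one_of_sum_pow_eq, Fintype.card_fin]
    · simp only [Fintype.card_fin]; omega
    · intro j hj1 hj2
      exact_mod_cast hpow j hj1 (by simpa using hj2)
  refine ⟨hclosed, ⟨Polynomial.C (S / p) * Polynomial.X ^ (n - 1) * Polynomial.X, fun k => ?_⟩,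
    fun k => by rw [c₀_periodic p k],
    fun d hd hper => le_of_periodic_c₀ hd fun k => mul_left_cancel₀ hS (hper k)⟩
  simp only [hclosed, ehrSeg_eq_c₀_add_div, Polynomial.eval_mul, Polynomial.eval_pow,
    Polynomial.eval_C, Polynomial.eval_X]
  ring

theorem stmt14 (p : ℕ) (hp : 0 < p) (n : ℕ) (hn : 2 ≤ n)
    (s : Fin (n - 1) → ℤ) (t : Fin (n - 2) → ℤ)
    (hs : ∀ i, 0 < s i) (ht : ∀ j, 0 < t j)
    (hpow : ∀ k : ℕ, 1 ≤ k → k ≤ n - 2 → ∑ i, (s i) ^ k = ∑ j, (t j) ^ k)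
    (f : ℕ → ℚ)
    (hf : ∀ k : ℕ, f k =
      ((∏ i, ((s i : ℚ) * k + 1)) - ∏ j, ((t j : ℚ) * k + 1)) * ehrSeg p k) :
    (∀ k : ℕ, f k = (∏ i, (s i : ℚ)) * (k : ℚ) ^ (n - 1) * ehrSeg p k) ∧
    (∃ P : Polynomial ℚ, ∀ k : ℕ,
      f k = (∏ i, (s i : ℚ)) * c₀ p k * (k : ℚ) ^ (n - 1) + P.eval (k : ℚ)) ∧
    (∀ k : ℕ, (∏ i, (s i : ℚ)) * c₀ p (k + p) = (∏ i, (s i : ℚ)) * c₀ p k) ∧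
    (∀ d : ℕ, 0 < d →
      (∀ k : ℕ, (∏ i, (s i : ℚ)) * c₀ p (k + d) = (∏ i, (s i : ℚ)) * c₀ p k) → p ≤ d) :=
  stmt14_general p n hn s t hs hpow f hf
end

section
/- For a rational polytope P ⊂ ℝⁿ, let mᵢ denote the i-index: the least positive integer m such that every i-dimensional face of mP contains a lattice point in its affine span. Then the indices satisfy the divisibility chain mₙ ∣ m_{n-1} ∣ ⋯ ∣ m₀, and in particular mₙ ≤ m_{n-1} ≤ ⋯ ≤ m₀. -/
open scoped Pointwise

/-- The convex hull of finitely many rational points of `ℝⁿ`. -/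
def IsRationalPolytope (n : ℕ) (P : Set (Fin n → ℝ)) : Prop :=
  ∃ V : Finset (Fin n → ℚ), V.Nonempty ∧
    P = convexHull ℝ ((fun v : Fin n → ℚ => fun j => ((v j : ℚ) : ℝ)) '' (V : Set (Fin n → ℚ)))

/-- `m` is valid for the `i`-index of `P`: every `i`-dimensional face of `mP` contains
a lattice point in its affine span.  (Faces are the nonempty exposed faces.) -/
def IndexValid (n : ℕ) (P : Set (Fin n → ℝ)) (i m : ℕ) : Prop :=
  0 < m ∧ ∀ F : Set (Fin n → ℝ), IsExposed ℝ P F → F.Nonempty →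
    Module.finrank ℝ (affineSpan ℝ F).direction = i →
      ∃ x : Fin n → ℤ, (fun j => ((x j : ℤ) : ℝ)) ∈ affineSpan ℝ ((m : ℝ) • F)

/-- The `i`-index of `P`: the least positive integer `m` such that every `i`-dimensional
face of `mP` contains a lattice point in its affine span. -/
noncomputable def iIndex (n : ℕ) (P : Set (Fin n → ℝ)) (i : ℕ) : ℕ :=
  sInf {m : ℕ | IndexValid n P i m}


open Module


variable {n : ℕ}

local notation "E" => (Fin n → ℝ)

-- dual functional vanishing on U, value 1 at x ∉ U
lemma exists_dual_vanish {U : Submodule ℝ (Fin n → ℝ)} {x : Fin n → ℝ} (hx : x ∉ U) :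
    ∃ φ : (Fin n → ℝ) →ₗ[ℝ] ℝ, (∀ u ∈ U, φ u = 0) ∧ φ x = 1 := by
  have hxq : (Submodule.Quotient.mk x : (Fin n → ℝ) ⧸ U) ≠ 0 := by
    simpa [Submodule.Quotient.mk_eq_zero] using hx
  obtain ⟨ψ, hψ⟩ : ∃ ψ : Module.Dual ℝ ((Fin n → ℝ) ⧸ U), ψ (Submodule.Quotient.mk x) ≠ 0 := by
    by_contra h
    push_neg at h
    exact hxq ((Module.forall_dual_apply_eq_zero_iff ℝ _).1 h)
  refine ⟨(ψ (Submodule.Quotient.mk x))⁻¹ • (ψ.comp U.mkQ), fun u hu => ?_, ?_⟩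
  · simp [Submodule.mkQ_apply, (Submodule.Quotient.mk_eq_zero U).2 hu]
  · simp [Submodule.mkQ_apply, inv_mul_cancel₀ hψ]

-- max over hull is at most max over vertices
lemma hull_le_max {V : Finset (Fin n → ℝ)} {l : (Fin n → ℝ) →L[ℝ] ℝ} {c : ℝ}
    (hV : ∀ v ∈ V, l v ≤ c) {x : Fin n → ℝ} (hx : x ∈ convexHull ℝ (V : Set (Fin n → ℝ))) :
    l x ≤ c := by
  have hconv : Convex ℝ {y : Fin n → ℝ | l y ≤ c} :=
    convex_halfSpace_le (l.toLinearMap.isLinear) c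
  exact convexHull_min (fun v hv => hV v hv) hconv hx

lemma hull_argmax {V : Finset (Fin n → ℝ)} {l : (Fin n → ℝ) →L[ℝ] ℝ} {c : ℝ}
    (hV : ∀ v ∈ V, l v ≤ c) {x : Fin n → ℝ} (hx : x ∈ convexHull ℝ (V : Set (Fin n → ℝ)))
    (hxc : l x = c) :
    x ∈ convexHull ℝ ((V.filter (fun v => l v = c) : Finset (Fin n → ℝ)) : Set (Fin n → ℝ)) := by
  classical
  rw [Finset.convexHull_eq] at hx
  obtain ⟨w, hw0, hw1, hwx⟩ := hx
  have hlx : ∑ v ∈ V, w v * l v = c := by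
    have := hwx ▸ hxc
    rw [Finset.centerMass, hw1, inv_one, one_smul] at this
    rw [← this]
    simp [map_sum, map_smul, smul_eq_mul]
  -- every positive-weight vertex attains the max
  have key : ∀ v ∈ V, w v ≠ 0 → l v = c := by
    intro v hv hwv
    by_contra hne
    have hlt : l v < c := lt_of_le_of_ne (hV v hv) hne
    have hpos : 0 < w v := lt_of_le_of_ne (hw0 v hv) (Ne.symm hwv)
    have h1 : ∑ u ∈ V, w u * (c - l u) = 0 := by
      have : ∑ u ∈ V, w u * (c - l u) = (∑ u ∈ V, w u * c) - ∑ u ∈ V, w u * l u := by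
        rw [← Finset.sum_sub_distrib]; congr 1; ext u; ring
      rw [this, ← Finset.sum_mul, hw1, one_mul, hlx, sub_self]
    have h2 : w v * (c - l v) ≤ ∑ u ∈ V, w u * (c - l u) :=
      Finset.single_le_sum (f := fun u => w u * (c - l u))
        (fun u hu => mul_nonneg (hw0 u hu) (by linarith [hV u hu])) hv
    have h3 : 0 < w v * (c - l v) := mul_pos hpos (by linarith)
    linarith [h1 ▸ h2]
  have hsub : V.filter (fun v => w v ≠ 0) ⊆ V.filter (fun v => l v = c) := by
    intro v hv
    rw [Finset.mem_filter] at hv ⊢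
    exact ⟨hv.1, key v hv.1 hv.2⟩
  have hx' : x ∈ convexHull ℝ ((V.filter (fun v => w v ≠ 0) : Finset (Fin n → ℝ)) :
      Set (Fin n → ℝ)) := by
    have := Finset.centerMass_mem_convexHull (V.filter (fun v => w v ≠ 0)) (w := w)
      (fun v hv => hw0 v (Finset.mem_filter.1 hv).1)
      (by rw [Finset.sum_filter_ne_zero, hw1]; norm_num)
      (z := id) (fun v hv => Finset.mem_coe.2 hv)
    rwa [Finset.centerMass_filter_ne_zero, hwx] at this
  exact convexHull_mono (by exact_mod_cast hsub) hx'

section FaceHull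
variable {V : Finset (Fin n → ℝ)} {l : (Fin n → ℝ) →L[ℝ] ℝ}

/-- A nonempty exposed face of a hull of a finite set is the hull of the vertices it contains. -/
lemma face_hull (hF : (({x ∈ convexHull ℝ (V : Set (Fin n → ℝ)) |
      ∀ y ∈ convexHull ℝ (V : Set (Fin n → ℝ)), l y ≤ l x}) : Set (Fin n → ℝ)).Nonempty) :
    ∃ S : Finset (Fin n → ℝ), S.Nonempty ∧ (S : Set (Fin n → ℝ)) ⊆
      {x ∈ convexHull ℝ (V : Set (Fin n → ℝ)) | ∀ y ∈ convexHull ℝ (V : Set (Fin n → ℝ)), l y ≤ l x} ∧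
      {x ∈ convexHull ℝ (V : Set (Fin n → ℝ)) | ∀ y ∈ convexHull ℝ (V : Set (Fin n → ℝ)), l y ≤ l x}
        = convexHull ℝ (S : Set (Fin n → ℝ)) := by
  classical
  set P := convexHull ℝ (V : Set (Fin n → ℝ)) with hP
  set F := {x ∈ P | ∀ y ∈ P, l y ≤ l x} with hFdef
  obtain ⟨x₀, hx₀P, hx₀max⟩ := hF
  set c := l x₀ with hc
  have hVle : ∀ v ∈ V, l v ≤ c := fun v hv => hx₀max v (subset_convexHull ℝ _ hv)
  have hmem_iff : ∀ z, z ∈ F ↔ z ∈ P ∧ l z = c := by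
    intro z
    constructor
    · rintro ⟨hzP, hzmax⟩
      exact ⟨hzP, le_antisymm (hx₀max z hzP) (hzmax x₀ hx₀P)⟩
    · rintro ⟨hzP, hzc⟩
      exact ⟨hzP, fun y hy => hzc ▸ hx₀max y hy⟩
  refine ⟨V.filter (fun v => l v = c), ?_, ?_, ?_⟩
  · -- nonempty : x₀ is in the hull and attains c, so some vertex attains c
    by_contra hne
    rw [Finset.not_nonempty_iff_eq_empty] at hne
    have := hull_argmax hVle hx₀P hc.symm
    rw [hne] at this
    simp at this
  · intro v hv
    rw [Finset.mem_coe, Finset.mem_filter] at hv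
    exact (hmem_iff v).2 ⟨subset_convexHull ℝ _ hv.1, hv.2⟩
  · apply Set.Subset.antisymm
    · intro x hx
      obtain ⟨hxP, hxc⟩ := (hmem_iff x).1 hx
      exact hull_argmax hVle hxP hxc
    · intro x hx
      have hFconv : Convex ℝ F := by
        have : IsExposed ℝ P F := fun _ => ⟨l, rfl⟩
        exact this.convex (convex_convexHull ℝ _)
      refine convexHull_min ?_ hFconv hx
      intro v hv
      rw [Finset.mem_coe, Finset.mem_filter] at hv
      exact (hmem_iff v).2 ⟨subset_convexHull ℝ _ hv.1, hv.2⟩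
end FaceHull

section SmulSpan
variable {F : Set (Fin n → ℝ)}

lemma smul_vectorSpan {c : ℝ} (hc : c ≠ 0) (F : Set (Fin n → ℝ)) :
    vectorSpan ℝ (c • F) = vectorSpan ℝ F := by
  rw [vectorSpan_def, vectorSpan_def]
  have hset : (c • F) -ᵥ (c • F) = c • (F -ᵥ F) := by
    ext z
    simp only [Set.mem_vsub, Set.mem_smul_set, vsub_eq_sub]
    constructor
    · rintro ⟨x, ⟨a, ha, rfl⟩, y, ⟨b, hb, rfl⟩, rfl⟩
      exact ⟨a - b, ⟨a, ha, b, hb, rfl⟩, by rw [smul_sub]⟩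
    · rintro ⟨d, ⟨a, ha, b, hb, rfl⟩, rfl⟩
      exact ⟨c • a, ⟨a, ha, rfl⟩, c • b, ⟨b, hb, rfl⟩, by rw [smul_sub]⟩
  rw [hset, Submodule.span_smul_eq_of_isUnit _ c (isUnit_iff_ne_zero.2 hc)]

lemma smul_direction {c : ℝ} (hc : c ≠ 0) (F : Set (Fin n → ℝ)) :
    (affineSpan ℝ (c • F)).direction = (affineSpan ℝ F).direction := by
  rw [direction_affineSpan, direction_affineSpan, smul_vectorSpan hc]

/-- difference of lattice points in spans of dilates -/
lemma diff_closure {a b : ℕ} (hb : 0 < b) (hba : b < a) {F : Set (Fin n → ℝ)}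
    (hFne : F.Nonempty) {x y : Fin n → ℝ}
    (hx : x ∈ affineSpan ℝ ((a : ℝ) • F)) (hy : y ∈ affineSpan ℝ ((b : ℝ) • F)) :
    x - y ∈ affineSpan ℝ (((a - b : ℕ) : ℝ) • F) := by
  obtain ⟨p, hp⟩ := hFne
  have ha0 : (a : ℝ) ≠ 0 := by
    have : 0 < a := hb.trans hba
    exact_mod_cast this.ne'
  have hb0 : (b : ℝ) ≠ 0 := by exact_mod_cast hb.ne'
  have hab0 : ((a - b : ℕ) : ℝ) ≠ 0 := by
    have h : 0 < a - b := Nat.sub_pos_of_lt hba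
    exact_mod_cast h.ne'
  set W := (affineSpan ℝ F).direction with hW
  have hxp : x - (a : ℝ) • p ∈ W := by
    have h1 : (a : ℝ) • p ∈ affineSpan ℝ ((a : ℝ) • F) :=
      subset_affineSpan ℝ _ (Set.smul_mem_smul_set hp)
    have := AffineSubspace.vsub_mem_direction hx h1
    rwa [smul_direction ha0, vsub_eq_sub] at this
  have hyp : y - (b : ℝ) • p ∈ W := by
    have h1 : (b : ℝ) • p ∈ affineSpan ℝ ((b : ℝ) • F) :=
      subset_affineSpan ℝ _ (Set.smul_mem_smul_set hp)
    have := AffineSubspace.vsub_mem_direction hy h1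
    rwa [smul_direction hb0, vsub_eq_sub] at this
  have hq : ((a - b : ℕ) : ℝ) • p ∈ affineSpan ℝ (((a - b : ℕ) : ℝ) • F) :=
    subset_affineSpan ℝ _ (Set.smul_mem_smul_set hp)
  have hw : (x - (a : ℝ) • p) - (y - (b : ℝ) • p) ∈ W := W.sub_mem hxp hyp
  have hmem := AffineSubspace.vadd_mem_of_mem_direction
    (by rwa [smul_direction hab0] : (x - (a : ℝ) • p) - (y - (b : ℝ) • p)
      ∈ (affineSpan ℝ (((a - b : ℕ) : ℝ) • F)).direction) hq
  have heq : ((x - (a : ℝ) • p) - (y - (b : ℝ) • p)) +ᵥ (((a - b : ℕ) : ℝ) • p) = x - y := by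
    have hcast : ((a - b : ℕ) : ℝ) = (a : ℝ) - (b : ℝ) := by
      rw [Nat.cast_sub hba.le]
    rw [vadd_eq_add, hcast, sub_smul]
    abel
  rwa [heq] at hmem
end SmulSpan

section Facet
variable (S : Finset (Fin n → ℝ)) (l : (Fin n → ℝ) →L[ℝ] ℝ)

open Finset in
/-- argmax set of `l` on `S`. -/
noncomputable def argmaxSet : Finset (Fin n → ℝ) :=
  S.filter (fun v => ∀ u ∈ S, l u ≤ l v)

lemma argmaxSet_subset : argmaxSet S l ⊆ S := Finset.filter_subset _ _

lemma mem_argmaxSet {v : Fin n → ℝ} :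
    v ∈ argmaxSet S l ↔ v ∈ S ∧ ∀ u ∈ S, l u ≤ l v := Finset.mem_filter

lemma argmaxSet_nonempty (hS : S.Nonempty) : (argmaxSet S l).Nonempty := by
  obtain ⟨r, hrS, hr⟩ := S.exists_max_image l hS
  exact ⟨r, (mem_argmaxSet S l).2 ⟨hrS, hr⟩⟩

/-- the argmax set spans dimension at most `D - 1` if `l` is nonconstant on `S`. -/
lemma argmax_dim_le {s₁ s₂ : Fin n → ℝ} (hs₁ : s₁ ∈ S) (hs₂ : s₂ ∈ S)
    (hne : l s₁ ≠ l s₂) :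
    Module.finrank ℝ (vectorSpan ℝ ((argmaxSet S l : Finset (Fin n → ℝ)) : Set (Fin n → ℝ)))
      ≤ Module.finrank ℝ (vectorSpan ℝ (S : Set (Fin n → ℝ))) - 1 := by
  set K := vectorSpan ℝ (S : Set (Fin n → ℝ)) ⊓ LinearMap.ker (l : (Fin n → ℝ) →ₗ[ℝ] ℝ) with hK
  have h1 : vectorSpan ℝ ((argmaxSet S l : Finset (Fin n → ℝ)) : Set (Fin n → ℝ)) ≤ K := by
    rw [vectorSpan_def, Submodule.span_le]
    rintro z ⟨x, hx, y, hy, rfl⟩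
    rw [Finset.mem_coe] at hx hy
    obtain ⟨hxS, hxmax⟩ := (mem_argmaxSet S l).1 hx
    obtain ⟨hyS, hymax⟩ := (mem_argmaxSet S l).1 hy
    refine Submodule.mem_inf.2 ⟨?_, ?_⟩
    · exact vsub_mem_vectorSpan ℝ (Finset.mem_coe.2 hxS) (Finset.mem_coe.2 hyS)
    · rw [LinearMap.mem_ker]
      have : l x = l y := le_antisymm (hymax x hxS) (hxmax y hyS)
      simp [vsub_eq_sub, this]
  have h2 : K < vectorSpan ℝ (S : Set (Fin n → ℝ)) := by
    refine lt_of_le_of_ne inf_le_left ?_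
    intro hEq
    have hmem : s₁ - s₂ ∈ vectorSpan ℝ (S : Set (Fin n → ℝ)) := by
      have := vsub_mem_vectorSpan ℝ (Finset.mem_coe.2 hs₁) (Finset.mem_coe.2 hs₂)
      rwa [vsub_eq_sub] at this
    rw [← hEq] at hmem
    have := (Submodule.mem_inf.1 hmem).2
    rw [LinearMap.mem_ker] at this
    simp only [ContinuousLinearMap.coe_coe, map_sub] at this
    exact hne (by linarith [sub_eq_zero.1 this])
  have h3 : Module.finrank ℝ K < Module.finrank ℝ (vectorSpan ℝ (S : Set (Fin n → ℝ))) :=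
    Submodule.finrank_lt_finrank_of_lt h2
  have h4 := Submodule.finrank_mono h1
  omega
end Facet

section Rotate
open Module

set_option maxHeartbeats 1000000 in
lemma rotate_step (S : Finset (Fin n → ℝ)) (hS : S.Nonempty) (l : (Fin n → ℝ) →L[ℝ] ℝ)
    (hjD : Module.finrank ℝ (vectorSpan ℝ ((argmaxSet S l : Finset (Fin n → ℝ)) : Set (Fin n → ℝ))) + 2
      ≤ Module.finrank ℝ (vectorSpan ℝ (S : Set (Fin n → ℝ)))) :
    ∃ l' : (Fin n → ℝ) →L[ℝ] ℝ,
      (∃ s₁ ∈ S, ∃ s₂ ∈ S, l' s₁ ≠ l' s₂) ∧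
      Module.finrank ℝ (vectorSpan ℝ ((argmaxSet S l : Finset (Fin n → ℝ)) : Set (Fin n → ℝ))) <
      Module.finrank ℝ (vectorSpan ℝ ((argmaxSet S l' : Finset (Fin n → ℝ)) : Set (Fin n → ℝ))) := by
  classical
  set R := argmaxSet S l with hR
  set U := vectorSpan ℝ ((R : Finset (Fin n → ℝ)) : Set (Fin n → ℝ)) with hU
  set D := Module.finrank ℝ (vectorSpan ℝ (S : Set (Fin n → ℝ))) with hD
  obtain ⟨r₀, hr₀⟩ := argmaxSet_nonempty S l hS
  have hr₀S : r₀ ∈ S := argmaxSet_subset S l hr₀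
  have hr₀max : ∀ u ∈ S, l u ≤ l r₀ := ((mem_argmaxSet S l).1 hr₀).2
  -- a vertex whose difference escapes U
  have hvex : ∃ v ∈ S, v - r₀ ∉ U := by
    by_contra hcon
    push_neg at hcon
    have hle : vectorSpan ℝ (S : Set (Fin n → ℝ)) ≤ U := by
      rw [vectorSpan_eq_span_vsub_set_right ℝ (Finset.mem_coe.2 hr₀S), Submodule.span_le]
      rintro z ⟨u, hu, rfl⟩
      have := hcon u (Finset.mem_coe.1 hu)
      simpa [vsub_eq_sub] using this
    have := Submodule.finrank_mono hle
    omega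
  obtain ⟨v, hvS, hvU⟩ := hvex
  set U₁ := U ⊔ Submodule.span ℝ {v - r₀} with hU₁
  have hU₁rank : Module.finrank ℝ U₁ ≤ Module.finrank ℝ U + 1 := by
    have := Submodule.finrank_add_le_finrank_add_finrank U (Submodule.span ℝ {v - r₀})
    have hv0 : v - r₀ ≠ 0 := fun h => hvU (h ▸ U.zero_mem)
    rw [finrank_span_singleton hv0] at this
    exact this
  have hwex : ∃ w ∈ S, w - r₀ ∉ U₁ := by
    by_contra hcon
    push_neg at hcon
    have hle : vectorSpan ℝ (S : Set (Fin n → ℝ)) ≤ U₁ := by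
      rw [vectorSpan_eq_span_vsub_set_right ℝ (Finset.mem_coe.2 hr₀S), Submodule.span_le]
      rintro z ⟨u, hu, rfl⟩
      have := hcon u (Finset.mem_coe.1 hu)
      simpa [vsub_eq_sub] using this
    have := Submodule.finrank_mono hle
    omega
  obtain ⟨w, hwS, hwU₁⟩ := hwex
  have hwU : w - r₀ ∉ U := fun h => hwU₁ (Submodule.mem_sup_left h)
  -- the gap function
  set h : (Fin n → ℝ) → ℝ := fun u => l r₀ - l u with hh
  have hge : ∀ u ∈ S, 0 ≤ h u := fun u hu => by simp [hh]; linarith [hr₀max u hu]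
  have hmemR : ∀ u ∈ S, h u = 0 → u ∈ R := by
    intro u hu h0
    refine (mem_argmaxSet S l).2 ⟨hu, fun z hz => ?_⟩
    have : l u = l r₀ := by simp [hh] at h0; linarith
    rw [this]; exact hr₀max z hz
  have hRU : ∀ u ∈ R, u - r₀ ∈ U := by
    intro u hu
    have := vsub_mem_vectorSpan ℝ (Finset.mem_coe.2 hu) (Finset.mem_coe.2 hr₀)
    rwa [vsub_eq_sub] at this
  have hvR : v ∉ R := fun h => hvU (hRU v h)
  have hwR : w ∉ R := fun h => hwU (hRU w h)
  have hv_pos : 0 < h v := lt_of_le_of_ne (hge v hvS) (fun h0 => hvR (hmemR v hvS h0.symm))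
  have hw_pos : 0 < h w := lt_of_le_of_ne (hge w hwS) (fun h0 => hwR (hmemR w hwS h0.symm))
  -- build the tilting functional
  obtain ⟨φb, hφbU, hφbv⟩ := exists_dual_vanish hvU
  obtain ⟨φa, hφaU₁, hφaw⟩ := exists_dual_vanish hwU₁
  set φ : (Fin n → ℝ) →ₗ[ℝ] ℝ :=
    (h v) • φb + (h w / 2 - h v * φb (w - r₀)) • φa with hφ
  have hφU : ∀ u ∈ U, φ u = 0 := by
    intro u hu
    simp [hφ, hφbU u hu, hφaU₁ u (Submodule.mem_sup_left hu)]
  have hφv : φ (v - r₀) = h v := by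
    have hva : φa (v - r₀) = 0 :=
      hφaU₁ _ (Submodule.mem_sup_right (Submodule.mem_span_singleton_self _))
    simp [hφ, hφbv, hva]
  have hφw : φ (w - r₀) = h w / 2 := by
    simp [hφ, hφaw]
  set d : (Fin n → ℝ) → ℝ := fun u => φ u - φ r₀ with hd
  have hdsub : ∀ u, d u = φ (u - r₀) := by intro u; simp [hd, map_sub]
  have hdR : ∀ u ∈ R, d u = 0 := fun u hu => by rw [hdsub]; exact hφU _ (hRU u hu)
  have hdv : d v = h v := by rw [hdsub, hφv]
  have hdw : d w = h w / 2 := by rw [hdsub, hφw]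
  -- crossing time
  set T := S.filter (fun u => 0 < d u) with hT
  have hvT : v ∈ T := Finset.mem_filter.2 ⟨hvS, by rw [hdv]; exact hv_pos⟩
  have hwT : w ∈ T := Finset.mem_filter.2 ⟨hwS, by rw [hdw]; exact half_pos hw_pos⟩
  have hTne : T.Nonempty := ⟨v, hvT⟩
  have hTR : ∀ u ∈ T, u ∉ R ∧ 0 < h u ∧ 0 < d u := by
    intro u hu
    obtain ⟨huS, hud⟩ := Finset.mem_filter.1 hu
    have huR : u ∉ R := fun h => by rw [hdR u h] at hud; exact lt_irrefl _ hud
    exact ⟨huR, lt_of_le_of_ne (hge u huS) (fun h0 => huR (hmemR u huS h0.symm)), hud⟩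
  set t : ℝ := T.inf' hTne (fun u => h u / d u) with ht
  have ht_pos : 0 < t := by
    rw [ht, Finset.lt_inf'_iff]
    intro u hu
    obtain ⟨-, hh, hd⟩ := hTR u hu
    positivity
  have ht_le : ∀ u ∈ T, t ≤ h u / d u := fun u hu => Finset.inf'_le _ hu
  -- the new functional
  set φc : (Fin n → ℝ) →L[ℝ] ℝ := LinearMap.toContinuousLinearMap φ with hφc
  set l' : (Fin n → ℝ) →L[ℝ] ℝ := l + t • φc with hl'
  have hl'app : ∀ u, l' u = l u + t * φ u := fun u => by
    simp [hl', hφc, LinearMap.coe_toContinuousLinearMap']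
  have hdiff : ∀ u, l' u - l' r₀ = t * d u - h u := by
    intro u
    rw [hl'app, hl'app, hd, hh]; ring
  have hmax : ∀ u ∈ S, l' u ≤ l' r₀ := by
    intro u hu
    have : t * d u - h u ≤ 0 := by
      rcases le_or_gt (d u) 0 with hdu | hdu
      · nlinarith [hge u hu]
      · have huT : u ∈ T := Finset.mem_filter.2 ⟨hu, hdu⟩
        have := ht_le u huT
        rw [le_div_iff₀ hdu] at this
        linarith
    linarith [hdiff u]
  have hmemR' : ∀ u, u ∈ argmaxSet S l' ↔ u ∈ S ∧ l' u = l' r₀ := by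
    intro u
    rw [mem_argmaxSet]
    constructor
    · rintro ⟨huS, humax⟩
      exact ⟨huS, le_antisymm (hmax u huS) (humax r₀ hr₀S)⟩
    · rintro ⟨huS, hueq⟩
      exact ⟨huS, fun z hz => hueq ▸ hmax z hz⟩
  -- the minimizing vertex joins the argmax set
  obtain ⟨u₀, hu₀T, hu₀⟩ := T.exists_mem_eq_inf' hTne (fun u => h u / d u)
  obtain ⟨hu₀R, hu₀h, hu₀d⟩ := hTR u₀ hu₀T
  have hu₀S : u₀ ∈ S := (Finset.mem_filter.1 hu₀T).1
  have hu₀mem : u₀ ∈ argmaxSet S l' := by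
    refine (hmemR' u₀).2 ⟨hu₀S, ?_⟩
    have : t * d u₀ = h u₀ := by
      rw [← ht] at hu₀
      rw [hu₀, div_mul_cancel₀ _ (ne_of_gt hu₀d)]
    linarith [hdiff u₀]
  have hr₀mem : r₀ ∈ argmaxSet S l' := (hmemR' r₀).2 ⟨hr₀S, rfl⟩
  have hRsub : R ⊆ argmaxSet S l' := by
    intro u hu
    refine (hmemR' u).2 ⟨argmaxSet_subset S l hu, ?_⟩
    have h0 : h u = 0 := by
      have : l u = l r₀ := le_antisymm (hr₀max u (argmaxSet_subset S l hu))
        (((mem_argmaxSet S l).1 hu).2 r₀ hr₀S)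
      simp [hh, this]
    have := hdiff u
    rw [hdR u hu, h0] at this
    linarith
  -- w is not in the new argmax set, so l' is nonconstant on S
  have hwnot : l' w ≠ l' r₀ := by
    intro hEq
    have h1 : t * d w - h w = 0 := by linarith [hdiff w]
    rw [hdw] at h1
    have ht2 : t = 2 := by
      field_simp at h1
      nlinarith [hw_pos]
    have := ht_le v hvT
    rw [hdv, div_self (ne_of_gt hv_pos)] at this
    linarith
  refine ⟨l', ⟨r₀, hr₀S, w, hwS, fun hEq => hwnot hEq.symm⟩, ?_⟩
  -- span strictly increases
  have hlt : U < vectorSpan ℝ ((argmaxSet S l' : Finset (Fin n → ℝ)) : Set (Fin n → ℝ)) := by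
    refine lt_of_le_of_ne (vectorSpan_mono ℝ (by exact_mod_cast hRsub)) ?_
    intro hEq
    have hmem : u₀ - r₀ ∈ U := by
      rw [hEq]
      have := vsub_mem_vectorSpan ℝ (Finset.mem_coe.2 hu₀mem) (Finset.mem_coe.2 hr₀mem)
      rwa [vsub_eq_sub] at this
    have := hφU _ hmem
    rw [← hdsub] at this
    linarith
  exact Submodule.finrank_lt_finrank_of_lt hlt
end Rotate

/-- dot product as a continuous linear map -/
noncomputable def dotC (a : Fin n → ℝ) : (Fin n → ℝ) →L[ℝ] ℝ :=
  LinearMap.toContinuousLinearMap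
    { toFun := fun x => ∑ j, a j * x j
      map_add' := by intro x y; simp [mul_add, Finset.sum_add_distrib]
      map_smul' := by intro c x; simp [Finset.mul_sum]; congr 1; ext j; ring }

lemma dotC_apply (a x : Fin n → ℝ) : dotC a x = ∑ j, a j * x j := by
  simp [dotC, LinearMap.coe_toContinuousLinearMap']

lemma exists_nonconstant (S : Finset (Fin n → ℝ))
    (hD : 1 ≤ Module.finrank ℝ (vectorSpan ℝ (S : Set (Fin n → ℝ)))) :
    ∃ l : (Fin n → ℝ) →L[ℝ] ℝ, ∃ s₁ ∈ S, ∃ s₂ ∈ S, l s₁ ≠ l s₂ := by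
  -- there exist two distinct points in S
  have hex : ∃ s₁ ∈ S, ∃ s₂ ∈ S, s₁ ≠ s₂ := by
    by_contra hcon
    push_neg at hcon
    have hbot : vectorSpan ℝ (S : Set (Fin n → ℝ)) = ⊥ := by
      rw [vectorSpan_def, Submodule.span_eq_bot]
      rintro z ⟨x, hx, y, hy, rfl⟩
      show x -ᵥ y = 0
      rw [vsub_eq_sub, sub_eq_zero]
      exact hcon x (Finset.mem_coe.1 hx) y (Finset.mem_coe.1 hy)
    rw [hbot] at hD
    simp at hD
  obtain ⟨s₁, hs₁, s₂, hs₂, hne⟩ := hex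
  refine ⟨dotC (s₁ - s₂), s₁, hs₁, s₂, hs₂, ?_⟩
  intro hEq
  have : dotC (s₁ - s₂) s₁ - dotC (s₁ - s₂) s₂ = 0 := by rw [hEq]; ring
  rw [← map_sub] at this
  rw [dotC_apply] at this
  have hsum : ∑ j, ((s₁ - s₂) j) ^ 2 = 0 := by
    rw [← this]; congr 1; ext j; simp [Pi.sub_apply]; ring
  have hzero : ∀ j, (s₁ - s₂) j = 0 := by
    intro j
    have hterm := Finset.sum_eq_zero_iff_of_nonneg
      (fun i (_ : i ∈ Finset.univ) => sq_nonneg ((s₁ - s₂) i)) |>.1 hsum j (Finset.mem_univ j)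
    exact pow_eq_zero_iff (by norm_num) |>.1 hterm
  apply hne
  funext j
  have := hzero j
  simpa [sub_eq_zero] using this

/-- main facet lemma: there is a functional whose argmax set spans dimension `D - 1`. -/
lemma exists_facet_functional (S : Finset (Fin n → ℝ)) (hS : S.Nonempty)
    (hD : 1 ≤ Module.finrank ℝ (vectorSpan ℝ (S : Set (Fin n → ℝ)))) :
    ∃ l' : (Fin n → ℝ) →L[ℝ] ℝ, (∃ s₁ ∈ S, ∃ s₂ ∈ S, l' s₁ ≠ l' s₂) ∧
      Module.finrank ℝ (vectorSpan ℝ ((argmaxSet S l' : Finset (Fin n → ℝ)) : Set (Fin n → ℝ)))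
        = Module.finrank ℝ (vectorSpan ℝ (S : Set (Fin n → ℝ))) - 1 := by
  classical
  set D := Module.finrank ℝ (vectorSpan ℝ (S : Set (Fin n → ℝ))) with hDdef
  obtain ⟨l₀, hnc₀⟩ := exists_nonconstant S hD
  -- strong induction on the codimension gap
  suffices H : ∀ k : ℕ, ∀ l : (Fin n → ℝ) →L[ℝ] ℝ, (∃ s₁ ∈ S, ∃ s₂ ∈ S, l s₁ ≠ l s₂) →
      D - 1 - Module.finrank ℝ (vectorSpan ℝ ((argmaxSet S l : Finset (Fin n → ℝ)) : Set (Fin n → ℝ))) ≤ k →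
      ∃ l' : (Fin n → ℝ) →L[ℝ] ℝ, (∃ s₁ ∈ S, ∃ s₂ ∈ S, l' s₁ ≠ l' s₂) ∧
        Module.finrank ℝ (vectorSpan ℝ ((argmaxSet S l' : Finset (Fin n → ℝ)) : Set (Fin n → ℝ))) = D - 1 by
    exact H (D - 1) l₀ hnc₀ (Nat.sub_le _ _)
  intro k
  induction k with
  | zero =>
    intro l hnc hgap
    obtain ⟨s₁, hs₁, s₂, hs₂, hne⟩ := hnc
    have hle := argmax_dim_le S l hs₁ hs₂ hne
    exact ⟨l, ⟨s₁, hs₁, s₂, hs₂, hne⟩, by omega⟩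
  | succ k ih =>
    intro l hnc hgap
    obtain ⟨s₁, hs₁, s₂, hs₂, hne⟩ := hnc
    have hle := argmax_dim_le S l hs₁ hs₂ hne
    by_cases hEq : Module.finrank ℝ
        (vectorSpan ℝ ((argmaxSet S l : Finset (Fin n → ℝ)) : Set (Fin n → ℝ))) = D - 1
    · exact ⟨l, ⟨s₁, hs₁, s₂, hs₂, hne⟩, hEq⟩
    · have hjD : Module.finrank ℝ
          (vectorSpan ℝ ((argmaxSet S l : Finset (Fin n → ℝ)) : Set (Fin n → ℝ))) + 2 ≤ D := by
        omega
      obtain ⟨l', hnc', hlt⟩ := rotate_step S hS l hjD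
      exact ih l' hnc' (by omega)

section Combine
open Module

set_option maxHeartbeats 1000000 in
/-- Every nonempty exposed face of dimension `≥ 1` of a polytope has an exposed
(in the polytope) face of dimension one less. -/
lemma exposed_facet_exists (V : Finset (Fin n → ℝ)) (F : Set (Fin n → ℝ))
    (hExp : IsExposed ℝ (convexHull ℝ (V : Set (Fin n → ℝ))) F) (hFne : F.Nonempty)
    (hD : 1 ≤ finrank ℝ (affineSpan ℝ F).direction) :
    ∃ G : Set (Fin n → ℝ), IsExposed ℝ (convexHull ℝ (V : Set (Fin n → ℝ))) G ∧ G.Nonempty ∧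
      G ⊆ F ∧ finrank ℝ (affineSpan ℝ G).direction = finrank ℝ (affineSpan ℝ F).direction - 1 := by
  classical
  set P := convexHull ℝ (V : Set (Fin n → ℝ)) with hP
  obtain ⟨l, hlF⟩ := hExp hFne
  set D := finrank ℝ (affineSpan ℝ F).direction with hDdef
  -- the face is the hull of its vertices
  obtain ⟨S, hSne, hSF, hFS⟩ := face_hull (V := V) (l := l) (hlF ▸ hFne)
  rw [← hlF] at hSF hFS
  have hdimS : finrank ℝ (vectorSpan ℝ (S : Set (Fin n → ℝ))) = D := by
    rw [hDdef, hFS, affineSpan_convexHull, direction_affineSpan]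
  -- facet functional on S
  obtain ⟨l', ⟨s₁, hs₁, s₂, hs₂, hs₁₂⟩, hfacet⟩ :=
    exists_facet_functional S hSne (hdimS ▸ hD)
  set R' := argmaxSet S l' with hR'
  obtain ⟨r', hr'⟩ := argmaxSet_nonempty S l' hSne
  have hr'S : r' ∈ S := argmaxSet_subset S l' hr'
  have hr'F : r' ∈ F := hSF (Finset.mem_coe.2 hr'S)
  set c : ℝ := l r' with hc
  set c' : ℝ := l' r' with hc'
  have hr'P : r' ∈ P := hlF ▸ hr'F |>.1
  have hFval : ∀ x ∈ F, l x = c := by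
    intro x hx
    rw [hlF] at hx
    obtain ⟨hxP, hxmax⟩ := hx
    exact le_antisymm ((hlF ▸ hr'F).2 x hxP) (hxmax r' hr'P)
  have hVle : ∀ v ∈ V, l v ≤ c := fun v hv =>
    (hlF ▸ hr'F).2 v (subset_convexHull ℝ _ hv)
  have hSlc : ∀ s ∈ S, l s = c := fun s hs => hFval s (hSF (Finset.mem_coe.2 hs))
  have hSl'le : ∀ s ∈ S, l' s ≤ c' := fun s hs => ((mem_argmaxSet S l').1 hr').2 s hs
  have hFl'le : ∀ x ∈ F, l' x ≤ c' := by
    intro x hx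
    rw [hFS] at hx
    exact hull_le_max hSl'le hx
  -- vertices off the face have strictly smaller l-value
  have hBlt : ∀ v ∈ V, v ∉ F → l v < c := by
    intro v hv hvF
    refine lt_of_le_of_ne (hVle v hv) (fun hEq => hvF ?_)
    rw [hlF]
    exact ⟨subset_convexHull ℝ _ hv, fun y hy => by
      rw [hEq]; exact (hlF ▸ hr'F).2 y hy⟩
  -- choose ε
  set B := V.filter (fun v => v ∉ F) with hB
  have hεex : ∃ ε : ℝ, 0 < ε ∧ ∀ v ∈ B, l v + ε * l' v < c + ε * c' := by
    by_cases hBne : B.Nonempty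
    · refine ⟨B.inf' hBne (fun v => (c - l v) / (1 + |l' v - c'|)), ?_, ?_⟩
      · rw [Finset.lt_inf'_iff]
        intro v hv
        obtain ⟨hvV, hvF⟩ := Finset.mem_filter.1 hv
        have h1 : 0 < c - l v := by linarith [hBlt v hvV hvF]
        have habs : (0:ℝ) < 1 + |l' v - c'| := by positivity
        positivity
      · intro v hv
        obtain ⟨hvV, hvF⟩ := Finset.mem_filter.1 hv
        have hclv : 0 < c - l v := by linarith [hBlt v hvV hvF]
        set q := |l' v - c'| with hq
        have hq0 : 0 ≤ q := abs_nonneg _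
        have hεle : B.inf' hBne (fun v => (c - l v) / (1 + |l' v - c'|)) ≤ (c - l v) / (1 + q) :=
          Finset.inf'_le _ hv
        have hεpos : 0 < B.inf' hBne (fun v => (c - l v) / (1 + |l' v - c'|)) := by
          rw [Finset.lt_inf'_iff]
          intro u hu
          obtain ⟨huV, huF⟩ := Finset.mem_filter.1 hu
          have h1 : 0 < c - l u := by linarith [hBlt u huV huF]
          positivity
        set ε := B.inf' hBne (fun v => (c - l v) / (1 + |l' v - c'|)) with hε
        have h1 : ε * (l' v - c') ≤ ε * q :=
          mul_le_mul_of_nonneg_left (le_abs_self _) hεpos.le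
        have h2 : ε * q ≤ ((c - l v) / (1 + q)) * q :=
          mul_le_mul_of_nonneg_right hεle hq0
        have h3 : ((c - l v) / (1 + q)) * q < c - l v := by
          rw [div_mul_eq_mul_div, div_lt_iff₀ (by positivity)]
          nlinarith
        nlinarith
    · exact ⟨1, one_pos, fun v hv => absurd ⟨v, hv⟩ hBne⟩
  obtain ⟨ε, hεpos, hεB⟩ := hεex
  set l'' : (Fin n → ℝ) →L[ℝ] ℝ := l + ε • l' with hl''
  have hl''app : ∀ x, l'' x = l x + ε * l' x := fun x => by simp [hl'']
  set cε : ℝ := c + ε * c' with hcε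
  have hVle'' : ∀ v ∈ V, l'' v ≤ cε := by
    intro v hv
    by_cases hvF : v ∈ F
    · rw [hl''app, hcε, hFval v hvF]
      have := hFl'le v hvF
      nlinarith
    · have := hεB v (Finset.mem_filter.2 ⟨hv, hvF⟩)
      rw [hl''app]; linarith
  set G := {x ∈ P | ∀ y ∈ P, l'' y ≤ l'' x} with hG
  have hPle'' : ∀ x ∈ P, l'' x ≤ cε := fun x hx => hull_le_max hVle'' hx
  have hr'G : l'' r' = cε := by rw [hl''app, hcε, hc, hc']
  have hGchar : ∀ x, x ∈ G ↔ x ∈ P ∧ l'' x = cε := by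
    intro x
    constructor
    · rintro ⟨hxP, hxmax⟩
      exact ⟨hxP, le_antisymm (hPle'' x hxP) (hr'G ▸ hxmax r' hr'P)⟩
    · rintro ⟨hxP, hxc⟩
      exact ⟨hxP, fun y hy => by rw [hxc]; exact hPle'' y hy⟩
  -- membership characterization via the two functionals
  have hGsub : ∀ x ∈ G, x ∈ F ∧ l x = c ∧ l' x = c' := by
    intro x hx
    obtain ⟨hxP, hxc⟩ := (hGchar x).1 hx
    have hx' : x ∈ convexHull ℝ
        ((V.filter (fun v => l'' v = cε) : Finset (Fin n → ℝ)) : Set (Fin n → ℝ)) :=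
      hull_argmax hVle'' hxP hxc
    have hfilter : ∀ v ∈ V.filter (fun v => l'' v = cε), l v = c ∧ l' v = c' := by
      intro v hv
      obtain ⟨hvV, hvc⟩ := Finset.mem_filter.1 hv
      have hvF : v ∈ F := by
        by_contra hvF
        have := hεB v (Finset.mem_filter.2 ⟨hvV, hvF⟩)
        rw [hl''app] at hvc
        rw [hcε] at hvc this
        linarith
      have hlv : l v = c := hFval v hvF
      refine ⟨hlv, ?_⟩
      have : ε * l' v = ε * c' := by
        rw [hl''app, hcε, hlv] at hvc
        linarith
      exact mul_left_cancel₀ (ne_of_gt hεpos) this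
    have hxl : l x = c := by
      have hconv : Convex ℝ {y : Fin n → ℝ | l y = c} :=
        convex_hyperplane (l.toLinearMap.isLinear) c
      exact convexHull_min (fun v hv => (hfilter v hv).1) hconv hx'
    have hxl' : l' x = c' := by
      have hconv : Convex ℝ {y : Fin n → ℝ | l' y = c'} :=
        convex_hyperplane (l'.toLinearMap.isLinear) c'
      exact convexHull_min (fun v hv => (hfilter v hv).2) hconv hx'
    have hxF : x ∈ F := by
      rw [hlF]
      exact ⟨hxP, fun y hy => by rw [hxl]; exact (hlF ▸ hr'F).2 y hy⟩
    exact ⟨hxF, hxl, hxl'⟩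
  have hR'G : (R' : Set (Fin n → ℝ)) ⊆ G := by
    intro r hr
    rw [Finset.mem_coe] at hr
    have hrS : r ∈ S := argmaxSet_subset S l' hr
    have hrF : r ∈ F := hSF (Finset.mem_coe.2 hrS)
    have hrl : l r = c := hFval r hrF
    have hrl' : l' r = c' := le_antisymm (hSl'le r hrS) (((mem_argmaxSet S l').1 hr).2 r' hr'S)
    refine (hGchar r).2 ⟨(hlF ▸ hrF).1, ?_⟩
    rw [hl''app, hrl, hrl', hcε]
  refine ⟨G, fun _ => ⟨l'', rfl⟩, ⟨r', (hGchar r').2 ⟨hr'P, hr'G⟩⟩,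
    fun x hx => (hGsub x hx).1, ?_⟩
  -- dimension computation
  rw [direction_affineSpan]
  have hlower : vectorSpan ℝ ((R' : Finset (Fin n → ℝ)) : Set (Fin n → ℝ)) ≤ vectorSpan ℝ G :=
    vectorSpan_mono ℝ hR'G
  have hupper : vectorSpan ℝ G ≤
      vectorSpan ℝ (S : Set (Fin n → ℝ)) ⊓ LinearMap.ker (l' : (Fin n → ℝ) →ₗ[ℝ] ℝ) := by
    rw [vectorSpan_def, Submodule.span_le]
    rintro z ⟨x, hx, y, hy, rfl⟩
    obtain ⟨hxF, -, hxl'⟩ := hGsub x hx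
    obtain ⟨hyF, -, hyl'⟩ := hGsub y hy
    refine Submodule.mem_inf.2 ⟨?_, ?_⟩
    · have : vectorSpan ℝ F = vectorSpan ℝ (S : Set (Fin n → ℝ)) := by
        rw [← direction_affineSpan, ← direction_affineSpan, hFS, affineSpan_convexHull]
      rw [← this]
      exact vsub_mem_vectorSpan ℝ hxF hyF
    · rw [LinearMap.mem_ker]
      show (l' : (Fin n → ℝ) →ₗ[ℝ] ℝ) (x -ᵥ y) = 0
      simp [vsub_eq_sub, hxl', hyl']
  have hupper2 : finrank ℝ
      (vectorSpan ℝ (S : Set (Fin n → ℝ)) ⊓ LinearMap.ker (l' : (Fin n → ℝ) →ₗ[ℝ] ℝ)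
        : Submodule ℝ (Fin n → ℝ)) ≤ D - 1 := by
    have h2 : vectorSpan ℝ (S : Set (Fin n → ℝ)) ⊓ LinearMap.ker (l' : (Fin n → ℝ) →ₗ[ℝ] ℝ)
        < vectorSpan ℝ (S : Set (Fin n → ℝ)) := by
      refine lt_of_le_of_ne inf_le_left ?_
      intro hEq
      have hmem : s₁ - s₂ ∈ vectorSpan ℝ (S : Set (Fin n → ℝ)) := by
        have := vsub_mem_vectorSpan ℝ (Finset.mem_coe.2 hs₁) (Finset.mem_coe.2 hs₂)
        rwa [vsub_eq_sub] at this
      rw [← hEq] at hmem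
      have := (Submodule.mem_inf.1 hmem).2
      rw [LinearMap.mem_ker] at this
      simp only [ContinuousLinearMap.coe_coe, map_sub] at this
      exact hs₁₂ (by linarith [sub_eq_zero.1 this])
    have := Submodule.finrank_lt_finrank_of_lt h2
    omega
  have hl := Submodule.finrank_mono hlower
  have hu := Submodule.finrank_mono hupper
  rw [hfacet, hdimS] at hl
  omega
end Combine

section Arith

/-- clearing the denominator of a rational -/
lemma rat_mul_nat (q : ℚ) {m : ℕ} (hdvd : q.den ∣ m) :
    ((q.num * (m / q.den : ℕ) : ℤ) : ℚ) = q * m := by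
  obtain ⟨t, ht⟩ := hdvd
  have hd : ((q.den : ℚ)) ≠ 0 := by exact_mod_cast q.den_nz
  have hden : (q.num : ℚ) = q * q.den := (div_eq_iff hd).1 (Rat.num_div_den q)
  rw [ht, Nat.mul_div_cancel_left t q.pos]
  push_cast
  rw [hden]
  ring
end Arith


section Main

/-- the common denominator of the vertices is valid for every index -/
lemma base_valid {P : Set (Fin n → ℝ)} (hP : IsRationalPolytope n P) :
    ∃ m₀ : ℕ, ∀ i : ℕ, IndexValid n P i m₀ := by
  classical
  obtain ⟨V, hVne, hPV⟩ := hP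
  set cast : (Fin n → ℚ) → (Fin n → ℝ) := fun v => fun j => ((v j : ℚ) : ℝ) with hcast
  set 𝕍 : Finset (Fin n → ℝ) := V.image cast with h𝕍
  have hPhull : P = convexHull ℝ ((𝕍 : Finset (Fin n → ℝ)) : Set (Fin n → ℝ)) := by
    rw [hPV, h𝕍, Finset.coe_image]
  set m₀ : ℕ := ∏ v ∈ V, ∏ j, (v j).den with hm₀
  have hm₀pos : 0 < m₀ := by
    apply Finset.prod_pos
    intro v hv
    apply Finset.prod_pos
    intro j hj
    exact (v j).pos
  refine ⟨m₀, fun i => ⟨hm₀pos, ?_⟩⟩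
  intro F hExp hFne hdim
  obtain ⟨l, hlF⟩ := hExp hFne
  obtain ⟨x₀, hx₀⟩ := hFne
  have hx₀P : x₀ ∈ P := (hlF ▸ hx₀).1
  have hx₀max : ∀ y ∈ P, l y ≤ l x₀ := (hlF ▸ hx₀).2
  set c := l x₀ with hc
  have hVle : ∀ v ∈ 𝕍, l v ≤ c := fun v hv =>
    hx₀max v (hPhull ▸ subset_convexHull ℝ _ hv)
  have hx₀mem := hull_argmax hVle (hPhull ▸ hx₀P) rfl
  have hfil_ne : (𝕍.filter (fun v => l v = c)).Nonempty := by
    by_contra hcon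
    rw [Finset.not_nonempty_iff_eq_empty] at hcon
    rw [hcon] at hx₀mem
    simp at hx₀mem
  obtain ⟨v, hvfil⟩ := hfil_ne
  obtain ⟨hv𝕍, hvc⟩ := Finset.mem_filter.1 hvfil
  have hvF : v ∈ F := by
    rw [hlF]
    exact ⟨hPhull ▸ subset_convexHull ℝ _ hv𝕍, fun y hy => by rw [hvc]; exact hx₀max y hy⟩
  obtain ⟨vq, hvqV, hvq⟩ := Finset.mem_image.1 hv𝕍
  have hdvd : ∀ j, (vq j).den ∣ m₀ := by
    intro j
    rw [hm₀]
    exact dvd_trans (Finset.dvd_prod_of_mem (fun j => (vq j).den) (Finset.mem_univ j))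
      (Finset.dvd_prod_of_mem (fun v => ∏ j, (v j).den) hvqV)
  refine ⟨fun j => (vq j).num * ((m₀ / (vq j).den : ℕ) : ℤ), ?_⟩
  have hval : (fun j => (((vq j).num * ((m₀ / (vq j).den : ℕ) : ℤ) : ℤ) : ℝ))
      = (m₀ : ℝ) • v := by
    funext j
    have hq := rat_mul_nat (vq j) (hdvd j)
    have : (((vq j).num * ((m₀ / (vq j).den : ℕ) : ℤ) : ℤ) : ℝ) = ((vq j : ℚ) : ℝ) * m₀ := by
      exact_mod_cast congrArg (fun q : ℚ => (q : ℝ)) hq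
    rw [this, ← hvq]
    simp [hcast, mul_comm]
  rw [hval]
  exact subset_affineSpan ℝ _ (Set.smul_mem_smul_set hvF)

/-- difference closure for `IndexValid`. -/
lemma indexValid_sub {P : Set (Fin n → ℝ)} {i a b : ℕ}
    (ha : IndexValid n P i a) (hb : IndexValid n P i b) (hba : b < a) :
    IndexValid n P i (a - b) := by
  refine ⟨by omega, ?_⟩
  intro F hExp hFne hdim
  obtain ⟨x, hx⟩ := ha.2 F hExp hFne hdim
  obtain ⟨y, hy⟩ := hb.2 F hExp hFne hdim
  refine ⟨fun j => x j - y j, ?_⟩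
  have := diff_closure hb.1 hba hFne hx hy
  have heq : (fun j => ((x j - y j : ℤ) : ℝ))
      = (fun j => ((x j : ℤ) : ℝ)) - (fun j => ((y j : ℤ) : ℝ)) := by
    funext j
    push_cast
    simp
  rw [heq]
  exact this

/-- minimal elements divide. -/
lemma sInf_dvd_of_mem {P : Set (Fin n → ℝ)} {i : ℕ}
    (hne : ∃ m, IndexValid n P i m) :
    ∀ m, IndexValid n P i m → sInf {m | IndexValid n P i m} ∣ m := by
  set d := sInf {m | IndexValid n P i m} with hd
  have hdmem : IndexValid n P i d := Nat.sInf_mem hne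
  have hdpos : 0 < d := hdmem.1
  intro m
  induction m using Nat.strong_induction_on with
  | _ m ih =>
    intro hm
    have hdm : d ≤ m := Nat.sInf_le hm
    rcases eq_or_lt_of_le hdm with hEq | hlt
    · exact hEq ▸ dvd_refl d
    · have hsub : IndexValid n P i (m - d) := indexValid_sub hm hdmem hlt
      have : d ∣ m - d := ih (m - d) (by omega) hsub
      obtain ⟨t, ht⟩ := this
      refine ⟨t + 1, ?_⟩
      have : m = (m - d) + d := by omega
      rw [this, ht]
      ring

/-- Claim A : validity passes from dimension `i` to dimension `i + 1`. -/
lemma indexValid_succ {P : Set (Fin n → ℝ)} (hP : IsRationalPolytope n P) {i m : ℕ}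
    (hm : IndexValid n P i m) : IndexValid n P (i + 1) m := by
  classical
  obtain ⟨V, hVne, hPV⟩ := hP
  set 𝕍 : Finset (Fin n → ℝ) := V.image (fun v => fun j => ((v j : ℚ) : ℝ)) with h𝕍
  have hPhull : P = convexHull ℝ ((𝕍 : Finset (Fin n → ℝ)) : Set (Fin n → ℝ)) := by
    rw [hPV, h𝕍, Finset.coe_image]
  refine ⟨hm.1, ?_⟩
  intro F hExp hFne hdim
  obtain ⟨G, hGexp, hGne, hGF, hGdim⟩ :=
    exposed_facet_exists 𝕍 F (hPhull ▸ hExp) hFne (by omega)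
  rw [hdim] at hGdim
  simp only [Nat.add_sub_cancel] at hGdim
  obtain ⟨x, hx⟩ := hm.2 G (hPhull ▸ hGexp) hGne hGdim
  refine ⟨x, ?_⟩
  have hmono : affineSpan ℝ ((m : ℝ) • G) ≤ affineSpan ℝ ((m : ℝ) • F) :=
    affineSpan_mono ℝ (Set.smul_set_mono hGF)
  exact hmono hx

end Main

theorem stmt16 (n : ℕ) (P : Set (Fin n → ℝ)) (hP : IsRationalPolytope n P)
    (hdim : Module.finrank ℝ (affineSpan ℝ P).direction = n) :
    ∀ i : ℕ, i < n →
      iIndex n P (i + 1) ∣ iIndex n P i ∧ iIndex n P (i + 1) ≤ iIndex n P i := by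
  intro i _
  obtain ⟨m₀, hm₀⟩ := base_valid hP
  have hne_i : ∃ m, IndexValid n P i m := ⟨m₀, hm₀ i⟩
  have hne_i1 : ∃ m, IndexValid n P (i + 1) m := ⟨m₀, hm₀ (i + 1)⟩
  have hdi_mem : IndexValid n P i (iIndex n P i) := Nat.sInf_mem hne_i
  have hdi_succ : IndexValid n P (i + 1) (iIndex n P i) := indexValid_succ hP hdi_mem
  have hdvd : iIndex n P (i + 1) ∣ iIndex n P i :=
    sInf_dvd_of_mem hne_i1 _ hdi_succ
  exact ⟨hdvd, Nat.le_of_dvd hdi_mem.1 hdvd⟩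
end
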